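/- arXiv:2601.04038 — 2 statements merged into one kernel-verified Lean document; each statement's English description precedes it below -/
import Mathlib

section
/- For 0 < α ≤ 1, the function y ↦ y^α + y^(−α) on (0,∞) is, when expressed in terms of the variable w = y + y^(−1) on [2,∞), a Bernstein function of w; that is, writing y^α + y^(−α) = h(y + y^(−1)), the function h : [2,∞) → ℝ is nonnegative with completely monotone derivative. -/
open MeasureTheory Real Set Filter

noncomputable section

/-- `f` is completely monotone on `S`: it is smooth on `S` and its iterated
derivatives within `S` alternate in sign, starting nonnegative. -/
def CompMonoOn (f : ℝ → ℝ) (S : Set ℝ) : Prop :=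
  ContDiffOn ℝ (⊤ : ℕ∞) f S ∧ ∀ (m : ℕ), ∀ x ∈ S, 0 ≤ (-1 : ℝ) ^ m * iteratedDerivWithin m f S x

namespace Bern

/-- The small root of `q + q⁻¹ = w`. -/
def qq (w : ℝ) : ℝ := (w - Real.sqrt (w ^ 2 - 4)) / 2

/-- The function of the theorem, in the variable `w`. -/
def hh (α : ℝ) (w : ℝ) : ℝ := qq w ^ α + qq w ^ (-α)

/-- An auxiliary family of parametric integrals. -/
def TT (α : ℝ) (k : ℕ) (w : ℝ) : ℝ :=
  ∫ r in Ioc (0:ℝ) 1, (r ^ α + r ^ (-α)) * r ^ k / (r ^ 2 + w * r + 1) ^ (k + 1)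

/-- The normalising constant. -/
def EE (α : ℝ) : ℝ := ∫ r in Ioi (0:ℝ), r ^ (-α) / (r + 1)

variable {α c q w : ℝ}

/-! ### Elementary facts about `qq` -/

lemma sq4_pos (hw : 2 < w) : 0 < w ^ 2 - 4 := by nlinarith

lemma sqrt_pos' (hw : 2 < w) : 0 < Real.sqrt (w ^ 2 - 4) :=
  Real.sqrt_pos.2 (sq4_pos hw)

lemma sqrt_lt' (hw : 2 < w) : Real.sqrt (w ^ 2 - 4) < w := by
  have h0 : (0:ℝ) < w := by linarith
  have := Real.sqrt_lt_sqrt (le_of_lt (sq4_pos hw)) (by nlinarith : w ^ 2 - 4 < w ^ 2)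
  rwa [Real.sqrt_sq h0.le] at this

lemma qq_pos (hw : 2 < w) : 0 < qq w := by
  have := sqrt_lt' hw; unfold qq; linarith

lemma sq_sqrt' (hw : 2 < w) : Real.sqrt (w ^ 2 - 4) ^ 2 = w ^ 2 - 4 :=
  Real.sq_sqrt (le_of_lt (sq4_pos hw))

lemma qq_lt_one (hw : 2 < w) : qq w < 1 := by
  have h1 : w - 2 < Real.sqrt (w ^ 2 - 4) := by
    have h2 : Real.sqrt ((w-2)^2) < Real.sqrt (w ^ 2 - 4) :=
      Real.sqrt_lt_sqrt (by positivity) (by nlinarith)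
    rwa [Real.sqrt_sq (by linarith : (0:ℝ) ≤ w - 2)] at h2
  unfold qq; linarith

lemma qq_inv (hw : 2 < w) : (qq w)⁻¹ = (w + Real.sqrt (w ^ 2 - 4)) / 2 := by
  have h := sq_sqrt' hw
  have h2 : qq w * ((w + Real.sqrt (w ^ 2 - 4)) / 2) = 1 := by
    unfold qq; nlinarith
  field_simp [(qq_pos hw).ne'] at h2 ⊢
  nlinarith [h2]

lemma qq_add_inv (hw : 2 < w) : qq w + (qq w)⁻¹ = w := by
  rw [qq_inv hw]; unfold qq; ring

lemma inv_sub_qq (hw : 2 < w) : (qq w)⁻¹ - qq w = Real.sqrt (w ^ 2 - 4) := by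
  rw [qq_inv hw]; unfold qq; ring

lemma hasDerivAt_qq (hw : 2 < w) :
    HasDerivAt qq (-(qq w) / Real.sqrt (w ^ 2 - 4)) w := by
  have hs := sqrt_pos' hw
  have h1 : HasDerivAt (fun w : ℝ => w ^ 2 - 4) (2 * w) w := by
    simpa using ((hasDerivAt_pow 2 w).sub_const 4)
  have h2 : HasDerivAt (fun w : ℝ => Real.sqrt (w ^ 2 - 4))
      (2 * w / (2 * Real.sqrt (w ^ 2 - 4))) w := by
    exact h1.sqrt (sq4_pos hw).ne'
  have h3 : HasDerivAt qq ((1 - 2 * w / (2 * Real.sqrt (w ^ 2 - 4))) / 2) w :=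
    ((hasDerivAt_id w).sub h2).div_const 2
  convert h3 using 1
  have hq : w - Real.sqrt (w ^ 2 - 4) = 2 * qq w := by unfold qq; ring
  field_simp
  nlinarith [hq]

lemma hasDerivAt_hh (hw : 2 < w) :
    HasDerivAt (hh α) (α * ((qq w) ^ (-α) - (qq w) ^ α) / Real.sqrt (w ^ 2 - 4)) w := by
  have hq0 := qq_pos hw
  have hs := sqrt_pos' hw
  have h1 : HasDerivAt (fun x => qq x ^ α)
      (-(qq w) / Real.sqrt (w ^ 2 - 4) * α * qq w ^ (α - 1)) w :=
    (hasDerivAt_qq hw).rpow_const (Or.inl hq0.ne')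
  have h2 : HasDerivAt (fun x => qq x ^ (-α))
      (-(qq w) / Real.sqrt (w ^ 2 - 4) * (-α) * qq w ^ (-α - 1)) w :=
    (hasDerivAt_qq hw).rpow_const (Or.inl hq0.ne')
  refine (h1.add h2).congr_deriv (Eq.symm ?_)
  have e1 : qq w ^ (α - 1) * qq w = qq w ^ α := by
    rw [← Real.rpow_add_one hq0.ne']; ring_nf
  have e2 : qq w ^ (-α - 1) * qq w = qq w ^ (-α) := by
    rw [← Real.rpow_add_one hq0.ne']; ring_nf
  have hsne : Real.sqrt (w ^ 2 - 4) ≠ 0 := hs.ne'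
  have key : -qq w * α * qq w ^ (α - 1) + -qq w * (-α) * qq w ^ (-α - 1)
      = α * (qq w ^ (-α) - qq w ^ α) := by linear_combination (-α) * e1 + α * e2
  calc α * (qq w ^ (-α) - qq w ^ α) / Real.sqrt (w ^ 2 - 4)
      = (-qq w * α * qq w ^ (α - 1) + -qq w * (-α) * qq w ^ (-α - 1)) / Real.sqrt (w ^ 2 - 4) := by
        rw [key]
    _ = -qq w / Real.sqrt (w ^ 2 - 4) * α * qq w ^ (α - 1)
        + -qq w / Real.sqrt (w ^ 2 - 4) * (-α) * qq w ^ (-α - 1) := by ring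

/-! ### Integrability of the kernels -/

lemma contOn_ker (α c : ℝ) (hc : 0 < c) {s : Set ℝ} (hs : ∀ x ∈ s, 0 < x) :
    ContinuousOn (fun r : ℝ => r ^ (-α) / (r + c)) s := by
  apply ContinuousOn.div
  · exact fun x hx => (Real.continuousAt_rpow_const x (-α) (Or.inl (hs x hx).ne')).continuousWithinAt
  · exact (continuous_id.add continuous_const).continuousOn
  · intro x hx; have := hs x hx; positivity

lemma base_Ioc (hα1 : α < 1) : IntegrableOn (fun r : ℝ => r ^ (-α)) (Ioc 0 1) := by
  have := intervalIntegral.intervalIntegrable_rpow' (a := 0) (b := 1)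
    (by linarith : (-1:ℝ) < -α)
  rwa [intervalIntegrable_iff_integrableOn_Ioc_of_le zero_le_one] at this

lemma intK_Ioc (hα1 : α < 1) (hc : 0 < c) :
    IntegrableOn (fun r : ℝ => r ^ (-α) / (r + c)) (Ioc 0 1) := by
  refine Integrable.mono' ((base_Ioc hα1).const_mul c⁻¹)
    ((contOn_ker α c hc (fun x hx => hx.1)).aestronglyMeasurable measurableSet_Ioc) ?_
  filter_upwards [ae_restrict_mem measurableSet_Ioc] with r hr
  have hr0 : 0 < r := hr.1
  have h1 : 0 < r + c := by linarith
  rw [Real.norm_eq_abs, abs_of_nonneg (by positivity)]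
  rw [div_le_iff₀ h1, mul_comm c⁻¹, mul_assoc]
  have : (1:ℝ) ≤ c⁻¹ * (r + c) := by
    rw [le_inv_mul_iff₀ hc]; linarith
  nlinarith [Real.rpow_nonneg hr0.le (-α)]

lemma intK_Ioi (hα0 : 0 < α) (hc : 0 < c) :
    IntegrableOn (fun r : ℝ => r ^ (-α) / (r + c)) (Ioi 1) := by
  have base : IntegrableOn (fun r : ℝ => r ^ (-α - 1)) (Ioi 1) :=
    integrableOn_Ioi_rpow_of_lt (by linarith) zero_lt_one
  refine Integrable.mono' base
    ((contOn_ker α c hc (fun x hx => lt_trans zero_lt_one hx)).aestronglyMeasurable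
      measurableSet_Ioi) ?_
  filter_upwards [ae_restrict_mem measurableSet_Ioi] with r hr
  have hr0 : (0:ℝ) < r := by have := mem_Ioi.1 hr; linarith
  have h1 : 0 < r + c := by linarith
  rw [Real.norm_eq_abs, abs_of_nonneg (by positivity)]
  rw [Real.rpow_sub_one hr0.ne', div_le_div_iff₀ h1 hr0]
  have h2 : r ≤ r + c := by linarith
  nlinarith [Real.rpow_nonneg hr0.le (-α)]

lemma intK (hα0 : 0 < α) (hα1 : α < 1) (hc : 0 < c) :
    IntegrableOn (fun r : ℝ => r ^ (-α) / (r + c)) (Ioi 0) := by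
  rw [← Ioc_union_Ioi_eq_Ioi (zero_le_one : (0:ℝ) ≤ 1)]
  exact (intK_Ioc hα1 hc).union (intK_Ioi hα0 hc)

/-- scaling: `∫_{0}^{∞} r^(-α)/(r+c) dr = c^(-α) ∫_0^∞ r^(-α)/(r+1) dr` -/
lemma scaleK (hc : 0 < c) :
    ∫ r in Ioi (0:ℝ), r ^ (-α) / (r + c) = c ^ (-α) * ∫ r in Ioi (0:ℝ), r ^ (-α) / (r + 1) := by
  have h := integral_comp_mul_left_Ioi (fun r : ℝ => r ^ (-α) / (r + c)) 0 hc
  rw [mul_zero] at h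
  have h2 : ∀ x ∈ Ioi (0:ℝ), (fun x : ℝ => (c * x) ^ (-α) / (c * x + c)) x
      = c ^ (-α - 1) * (x ^ (-α) / (x + 1)) := by
    intro x hx
    have hx0 : (0:ℝ) < x := hx
    dsimp only
    rw [Real.mul_rpow hc.le hx0.le, Real.rpow_sub_one hc.ne']
    have : c * x + c = c * (x + 1) := by ring
    rw [this]
    field_simp
  rw [setIntegral_congr_fun measurableSet_Ioi h2, integral_const_mul] at h
  have hcne : c ^ (-α - 1) ≠ 0 := (Real.rpow_pos_of_pos hc _).ne'
  have := h.symm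
  rw [smul_eq_mul] at this
  have hrw : c * (c ^ (-α - 1)) = c ^ (-α) := by
    rw [Real.rpow_sub_one hc.ne']; field_simp
  calc ∫ r in Ioi (0:ℝ), r ^ (-α) / (r + c)
      = c * (c⁻¹ * ∫ r in Ioi (0:ℝ), r ^ (-α) / (r + c)) := by field_simp
    _ = c * (c ^ (-α - 1) * ∫ r in Ioi (0:ℝ), r ^ (-α) / (r + 1)) := by rw [← this]
    _ = c ^ (-α) * ∫ r in Ioi (0:ℝ), r ^ (-α) / (r + 1) := by rw [← mul_assoc, hrw]

/-- substitution `r = 1/s` turning `∫_(0,1]` into `∫_[1,∞)` -/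
lemma inv_swap (f : ℝ → ℝ) :
    ∫ r in Ioc (0:ℝ) 1, f r = ∫ s in Ioi (1:ℝ), s ^ (-2:ℝ) * f s⁻¹ := by
  have h := integral_comp_rpow_Ioi ((Ioc (0:ℝ) 1).indicator f) (p := (-1:ℝ)) (by norm_num)
  have h1 : ∀ x ∈ Ioi (0:ℝ),
      (|(-1:ℝ)| * x ^ ((-1:ℝ) - 1)) • (Ioc (0:ℝ) 1).indicator f (x ^ (-1:ℝ))
      = (Ici (1:ℝ)).indicator (fun s => s ^ (-2:ℝ) * f s⁻¹) x := by
    intro x hx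
    have hx0 : (0:ℝ) < x := hx
    rw [Real.rpow_neg_one]
    by_cases hx1 : 1 ≤ x
    · have hmem : x⁻¹ ∈ Ioc (0:ℝ) 1 := ⟨by positivity, inv_le_one_of_one_le₀ hx1⟩
      rw [indicator_of_mem hmem, indicator_of_mem (mem_Ici.2 hx1)]
      norm_num
    · have hmem : x⁻¹ ∉ Ioc (0:ℝ) 1 := fun hm =>
        absurd hm.2 (not_le.2 ((one_lt_inv₀ hx0).2 (not_le.1 hx1)))
      rw [indicator_of_notMem hmem, indicator_of_notMem (fun hm => hx1 (mem_Ici.1 hm)),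
        smul_zero]
  rw [setIntegral_congr_fun measurableSet_Ioi h1] at h
  have e1 : Ici (1:ℝ) ∩ Ioi 0 = Ici 1 :=
    inter_eq_left.2 (fun x hx => lt_of_lt_of_le zero_lt_one (mem_Ici.1 hx))
  have e2 : Ioc (0:ℝ) 1 ∩ Ioi 0 = Ioc 0 1 :=
    inter_eq_left.2 (fun x (hx : x ∈ Ioc (0:ℝ) 1) => hx.1)
  rw [integral_indicator measurableSet_Ici, Measure.restrict_restrict measurableSet_Ici,
    e1, integral_Ici_eq_integral_Ioi] at h
  rw [integral_indicator measurableSet_Ioc, Measure.restrict_restrict measurableSet_Ioc,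
    e2] at h
  exact h.symm

lemma intKpos_Ioc (hα0 : 0 < α) (hα1 : α < 1) (hc : 0 < c) :
    IntegrableOn (fun r : ℝ => r ^ α / (r + c)) (Ioc 0 1) := by
  refine Integrable.mono' (intK_Ioc hα1 hc) ?_ ?_
  · apply ContinuousOn.aestronglyMeasurable ?_ measurableSet_Ioc
    apply ContinuousOn.div
    · exact fun x hx =>
        (Real.continuousAt_rpow_const x α (Or.inl hx.1.ne')).continuousWithinAt
    · exact (continuous_id.add continuous_const).continuousOn
    · intro x hx; have := hx.1; positivity
  · filter_upwards [ae_restrict_mem measurableSet_Ioc] with r hr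
    have hr0 : 0 < r := hr.1
    have h1 : 0 < r + c := by linarith
    rw [Real.norm_eq_abs, abs_of_nonneg (by positivity)]
    apply div_le_div_of_nonneg_right ?_ ?_ |>.trans_eq rfl
    · exact Real.rpow_le_rpow_of_exponent_ge hr0 hr.2 (by linarith)
    · exact h1.le

lemma Dker_int_Ioc (hα0 : 0 < α) (hα1 : α < 1) (hq0 : 0 < q) :
    IntegrableOn (fun r : ℝ => r ^ (-α) * (1/(r+q) - 1/(r+q⁻¹))) (Ioc 0 1) := by
  have h := (intK_Ioc (c := q) hα1 hq0).sub (intK_Ioc (c := q⁻¹) hα1 (inv_pos.2 hq0))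
  refine MeasureTheory.IntegrableOn.congr_fun h (fun r hr => ?_) measurableSet_Ioc
  have hr0 : 0 < r := hr.1
  have h1 : 0 < r + q := by linarith
  have h2 : 0 < r + q⁻¹ := by have := inv_pos.2 hq0; linarith
  simp only [Pi.sub_apply]
  field_simp

lemma Dker_int_Ioi (hα0 : 0 < α) (hα1 : α < 1) (hq0 : 0 < q) :
    IntegrableOn (fun r : ℝ => r ^ (-α) * (1/(r+q) - 1/(r+q⁻¹))) (Ioi 1) := by
  have h := (intK_Ioi (c := q) hα0 hq0).sub (intK_Ioi (c := q⁻¹) hα0 (inv_pos.2 hq0))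
  refine MeasureTheory.IntegrableOn.congr_fun h (fun r hr => ?_) measurableSet_Ioi
  have hr0 : (0:ℝ) < r := lt_trans zero_lt_one hr
  have h1 : 0 < r + q := by linarith
  have h2 : 0 < r + q⁻¹ := by have := inv_pos.2 hq0; linarith
  simp only [Pi.sub_apply]
  field_simp

lemma Dkerpos_int_Ioc (hα0 : 0 < α) (hα1 : α < 1) (hq0 : 0 < q) :
    IntegrableOn (fun r : ℝ => r ^ α * (1/(r+q) - 1/(r+q⁻¹))) (Ioc 0 1) := by
  have h := (intKpos_Ioc (c := q) hα0 hα1 hq0).sub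
    (intKpos_Ioc (c := q⁻¹) hα0 hα1 (inv_pos.2 hq0))
  refine MeasureTheory.IntegrableOn.congr_fun h (fun r hr => ?_) measurableSet_Ioc
  have hr0 : 0 < r := hr.1
  have h1 : 0 < r + q := by linarith
  have h2 : 0 < r + q⁻¹ := by have := inv_pos.2 hq0; linarith
  simp only [Pi.sub_apply]
  field_simp

/-- The main integral identity. -/
lemma key_integral (hα0 : 0 < α) (hα1 : α < 1) (hq0 : 0 < q) (hq1 : q < 1) :
    ∫ r in Ioc (0:ℝ) 1, (r ^ α + r ^ (-α)) / (r ^ 2 + (q + q⁻¹) * r + 1)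
      = (q ^ (-α) - q ^ α) / (q⁻¹ - q) * ∫ r in Ioi (0:ℝ), r ^ (-α) / (r + 1) := by
  have hqi : 1 < q⁻¹ := (one_lt_inv₀ hq0).2 hq1
  have hs : 0 < q⁻¹ - q := by linarith
  -- Step 1: rewrite integrand
  have step1 : ∫ r in Ioc (0:ℝ) 1, (r ^ α + r ^ (-α)) / (r ^ 2 + (q + q⁻¹) * r + 1)
      = (q⁻¹ - q)⁻¹ * ∫ r in Ioc (0:ℝ) 1,
          (r ^ α * (1/(r+q) - 1/(r+q⁻¹)) + r ^ (-α) * (1/(r+q) - 1/(r+q⁻¹))) := by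
    rw [← integral_const_mul]
    refine setIntegral_congr_fun measurableSet_Ioc (fun r hr => ?_)
    have hr0 : 0 < r := hr.1
    have h1 : 0 < r + q := by linarith
    have h2 : 0 < r + q⁻¹ := by linarith
    have hfact : r ^ 2 + (q + q⁻¹) * r + 1 = (r + q) * (r + q⁻¹) := by
      field_simp; ring
    have hdiff : 1/(r+q) - 1/(r+q⁻¹) = (q⁻¹ - q)/((r+q)*(r+q⁻¹)) := by
      rw [div_sub_div _ _ h1.ne' h2.ne']
      congr 1; ring
    rw [hfact, hdiff, eq_comm, inv_mul_eq_iff_eq_mul₀ hs.ne']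
    ring
  -- Step 2: split the integral
  have step2 : ∫ r in Ioc (0:ℝ) 1,
      (r ^ α * (1/(r+q) - 1/(r+q⁻¹)) + r ^ (-α) * (1/(r+q) - 1/(r+q⁻¹)))
      = (∫ r in Ioc (0:ℝ) 1, r ^ α * (1/(r+q) - 1/(r+q⁻¹)))
        + ∫ r in Ioc (0:ℝ) 1, r ^ (-α) * (1/(r+q) - 1/(r+q⁻¹)) :=
    integral_add (Dkerpos_int_Ioc hα0 hα1 hq0) (Dker_int_Ioc hα0 hα1 hq0)
  -- Step 3: inversion of the `r^α` part
  have step3 : (∫ r in Ioc (0:ℝ) 1, r ^ α * (1/(r+q) - 1/(r+q⁻¹)))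
      = ∫ r in Ioi (1:ℝ), r ^ (-α) * (1/(r+q) - 1/(r+q⁻¹)) := by
    rw [inv_swap (fun r => r ^ α * (1/(r+q) - 1/(r+q⁻¹)))]
    refine setIntegral_congr_fun measurableSet_Ioi (fun x hx => ?_)
    have hx1 : (1:ℝ) < x := hx
    have hx0 : (0:ℝ) < x := by linarith
    have hxa : (0:ℝ) < x ^ α := Real.rpow_pos_of_pos hx0 α
    have e1 : (x⁻¹) ^ α = (x ^ α)⁻¹ := Real.inv_rpow hx0.le α
    have e2 : x ^ (-α) = (x ^ α)⁻¹ := Real.rpow_neg hx0.le α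
    have e3 : x ^ (-2:ℝ) = (x ^ (2:ℕ))⁻¹ := by
      rw [Real.rpow_neg hx0.le, ← Real.rpow_natCast x 2]
      norm_num
    have h1 : 0 < x⁻¹ + q := by positivity
    have h2 : 0 < x⁻¹ + q⁻¹ := by positivity
    have h3 : 0 < x + q := by linarith
    have h4 : 0 < x + q⁻¹ := by positivity
    rw [e1, e2, e3]
    field_simp
    ring
  -- Step 4: assemble over `Ioi 0`
  have step4 : (∫ r in Ioc (0:ℝ) 1, r ^ (-α) * (1/(r+q) - 1/(r+q⁻¹)))
      + (∫ r in Ioi (1:ℝ), r ^ (-α) * (1/(r+q) - 1/(r+q⁻¹)))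
      = ∫ r in Ioi (0:ℝ), r ^ (-α) * (1/(r+q) - 1/(r+q⁻¹)) := by
    rw [← Ioc_union_Ioi_eq_Ioi (zero_le_one : (0:ℝ) ≤ 1)]
    exact (setIntegral_union (Set.Ioc_disjoint_Ioi le_rfl) measurableSet_Ioi
      (Dker_int_Ioc hα0 hα1 hq0) (Dker_int_Ioi hα0 hα1 hq0)).symm
  -- Step 5: evaluate
  have step5 : ∫ r in Ioi (0:ℝ), r ^ (-α) * (1/(r+q) - 1/(r+q⁻¹))
      = (q ^ (-α) - q ^ α) * ∫ r in Ioi (0:ℝ), r ^ (-α) / (r + 1) := by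
    have e : ∫ r in Ioi (0:ℝ), r ^ (-α) * (1/(r+q) - 1/(r+q⁻¹))
        = (∫ r in Ioi (0:ℝ), r ^ (-α) / (r + q))
          - ∫ r in Ioi (0:ℝ), r ^ (-α) / (r + q⁻¹) := by
      rw [← integral_sub (intK hα0 hα1 hq0) (intK hα0 hα1 (inv_pos.2 hq0))]
      refine setIntegral_congr_fun measurableSet_Ioi (fun r hr => ?_)
      have hr0 : (0:ℝ) < r := hr
      have h1 : 0 < r + q := by linarith
      have h2 : 0 < r + q⁻¹ := by positivity
      field_simp
    rw [e, scaleK hq0, scaleK (inv_pos.2 hq0)]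
    have hrw : (q⁻¹) ^ (-α) = q ^ α := by
      rw [Real.rpow_neg (inv_nonneg.2 hq0.le), Real.inv_rpow hq0.le, inv_inv]
    rw [hrw]
    ring
  rw [step1, step2, step3,
    add_comm (∫ r in Ioi (1:ℝ), r ^ (-α) * (1/(r+q) - 1/(r+q⁻¹)))
      (∫ r in Ioc (0:ℝ) 1, r ^ (-α) * (1/(r+q) - 1/(r+q⁻¹))),
    step4, step5]
  ring

/-! ### The parametric integrals `TT` -/

lemma base2_Ioc (hα0 : 0 < α) (hα1 : α < 1) :
    IntegrableOn (fun r : ℝ => r ^ α + r ^ (-α)) (Ioc 0 1) := by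
  have i1 := intervalIntegral.intervalIntegrable_rpow' (a := 0) (b := 1)
    (by linarith : (-1:ℝ) < α)
  have i2 := intervalIntegral.intervalIntegrable_rpow' (a := 0) (b := 1)
    (by linarith : (-1:ℝ) < -α)
  rw [intervalIntegrable_iff_integrableOn_Ioc_of_le zero_le_one] at i1 i2
  exact i1.add i2

lemma den_pos {w r : ℝ} (hw : 0 < w) (hr : 0 < r) : 1 < r ^ 2 + w * r + 1 := by nlinarith

lemma contOn_T (α : ℝ) (k m : ℕ) (w : ℝ) (hw : 0 < w) :
    ContinuousOn (fun r : ℝ => (r ^ α + r ^ (-α)) * r ^ k / (r ^ 2 + w * r + 1) ^ m)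
      (Ioc 0 1) := by
  apply ContinuousOn.div
  · apply ContinuousOn.mul ?_ (continuous_pow k).continuousOn
    intro x hx
    exact ((Real.continuousAt_rpow_const x α (Or.inl hx.1.ne')).add
      (Real.continuousAt_rpow_const x (-α) (Or.inl hx.1.ne'))).continuousWithinAt
  · have : Continuous fun r : ℝ => r ^ 2 + w * r + 1 := by continuity
    exact (this.pow m).continuousOn
  · intro x hx
    have : 1 < x ^ 2 + w * x + 1 := den_pos hw hx.1
    exact pow_ne_zero _ (by nlinarith : x ^ 2 + w * x + 1 ≠ 0)

lemma intT (hα0 : 0 < α) (hα1 : α < 1) (k m : ℕ) {w : ℝ} (hw : 0 < w) :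
    IntegrableOn (fun r : ℝ => (r ^ α + r ^ (-α)) * r ^ k / (r ^ 2 + w * r + 1) ^ m)
      (Ioc 0 1) := by
  refine Integrable.mono' (base2_Ioc hα0 hα1)
    ((contOn_T α k m w hw).aestronglyMeasurable measurableSet_Ioc) ?_
  filter_upwards [ae_restrict_mem measurableSet_Ioc] with r hr
  have hr0 : 0 < r := hr.1
  have hA : 0 < r ^ α + r ^ (-α) := by positivity
  have hD : (1:ℝ) ≤ (r ^ 2 + w * r + 1) ^ m := one_le_pow₀ (den_pos hw hr0).le
  have hrk : r ^ k ≤ 1 := pow_le_one₀ hr0.le hr.2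
  rw [Real.norm_eq_abs, abs_of_nonneg (by positivity)]
  calc (r ^ α + r ^ (-α)) * r ^ k / (r ^ 2 + w * r + 1) ^ m
      ≤ (r ^ α + r ^ (-α)) * r ^ k := div_le_self (by positivity) hD
    _ ≤ r ^ α + r ^ (-α) := mul_le_of_le_one_right hA.le hrk

lemma TT_nonneg (k : ℕ) {w : ℝ} (hw : 0 < w) : 0 ≤ TT α k w := by
  apply setIntegral_nonneg measurableSet_Ioc
  intro r hr
  have hr0 : 0 < r := hr.1
  have hD : (0:ℝ) < (r ^ 2 + w * r + 1) ^ (k+1) :=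
    pow_pos (lt_trans zero_lt_one (den_pos hw hr0)) _
  positivity

open Metric in
lemma hasDerivAt_TT (hα0 : 0 < α) (hα1 : α < 1) (k : ℕ) {w₀ : ℝ} (hw : 0 < w₀) :
    HasDerivAt (TT α k) (-((k:ℝ)+1) * TT α (k+1) w₀) w₀ := by
  have hball : ∀ w ∈ ball w₀ (w₀/2), 0 < w := by
    intro w hwb
    have := abs_lt.1 (mem_ball_iff_norm.1 hwb)
    linarith [this.1]
  have key := hasDerivAt_integral_of_dominated_loc_of_deriv_le
    (F := fun w r => (r ^ α + r ^ (-α)) * r ^ k / (r ^ 2 + w * r + 1) ^ (k + 1))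
    (F' := fun w r => -((k:ℝ)+1) * ((r ^ α + r ^ (-α)) * r ^ (k+1) / (r ^ 2 + w * r + 1) ^ (k + 2)))
    (μ := volume.restrict (Ioc (0:ℝ) 1)) (x₀ := w₀)
    (bound := fun r => ((k:ℝ)+1) * (r ^ α + r ^ (-α)))
    (ball_mem_nhds w₀ (half_pos hw)) ?_ ?_ ?_ ?_ ?_ ?_
  · have h2 := key.2
    have e : (∫ (a : ℝ) in Ioc (0:ℝ) 1,
        -((k:ℝ) + 1) * ((a ^ α + a ^ (-α)) * a ^ (k + 1) / (a ^ 2 + w₀ * a + 1) ^ (k + 2)))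
        = -((k:ℝ)+1) * TT α (k+1) w₀ := integral_const_mul _ _
    rw [e] at h2
    exact h2
  · filter_upwards [eventually_gt_nhds (half_lt_self hw)] with w hwpos
    exact ((contOn_T α k (k+1) w (by linarith)).aestronglyMeasurable measurableSet_Ioc)
  · exact intT hα0 hα1 k (k+1) hw
  · exact (((contOn_T α (k+1) (k+2) w₀ hw).const_smul (-((k:ℝ)+1))).aestronglyMeasurable
      measurableSet_Ioc)
  · filter_upwards [ae_restrict_mem measurableSet_Ioc] with r hr w hwb
    have hw' : 0 < w := hball w hwb
    have hr0 : 0 < r := hr.1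
    have hA : 0 < r ^ α + r ^ (-α) := by positivity
    have hD1 : (1:ℝ) < r ^ 2 + w * r + 1 := den_pos hw' hr0
    have hD : (1:ℝ) ≤ (r ^ 2 + w * r + 1) ^ (k+2) := one_le_pow₀ hD1.le
    have hDpos : (0:ℝ) < (r ^ 2 + w * r + 1) ^ (k+2) := by linarith
    have hx : (0:ℝ) ≤ (r ^ α + r ^ (-α)) * r ^ (k+1) / (r ^ 2 + w * r + 1) ^ (k + 2) := by
      positivity
    rw [Real.norm_eq_abs, abs_mul, abs_neg,
      abs_of_nonneg (by positivity : (0:ℝ) ≤ (k:ℝ)+1), abs_of_nonneg hx]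
    have hrk : r ^ (k+1) ≤ 1 := pow_le_one₀ hr0.le hr.2
    have step : (r ^ α + r ^ (-α)) * r ^ (k+1) / (r ^ 2 + w * r + 1) ^ (k + 2)
        ≤ r ^ α + r ^ (-α) := by
      calc (r ^ α + r ^ (-α)) * r ^ (k+1) / (r ^ 2 + w * r + 1) ^ (k + 2)
          ≤ (r ^ α + r ^ (-α)) * r ^ (k+1) :=
            div_le_self (by positivity) hD
        _ ≤ r ^ α + r ^ (-α) := mul_le_of_le_one_right hA.le hrk
    exact mul_le_mul_of_nonneg_left step (by positivity)
  · exact ((base2_Ioc hα0 hα1).const_mul _)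
  · filter_upwards [ae_restrict_mem measurableSet_Ioc] with r hr w hwb
    have hw' : 0 < w := hball w hwb
    have hr0 : 0 < r := hr.1
    have hD1 : (1:ℝ) < r ^ 2 + w * r + 1 := den_pos hw' hr0
    have hdne : r ^ 2 + w * r + 1 ≠ 0 := by linarith
    have hd : HasDerivAt (fun w : ℝ => r ^ 2 + w * r + 1) r w := by
      simpa using (((hasDerivAt_id w).mul_const r).const_add (r^2)).add_const 1
    have hd4 := (hasDerivAt_const w ((r ^ α + r ^ (-α)) * r ^ k)).div
      (hd.pow (k+1)) (pow_ne_zero _ hdne)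
    refine hd4.congr_deriv (Eq.symm ?_)
    simp only [Nat.add_sub_cancel, zero_mul, Pi.pow_apply]
    push_cast
    field_simp
    ring

/-! ### The normalising constant and the representation of the derivative -/

lemma EE_pos (hα0 : 0 < α) (hα1 : α < 1) : 0 < EE α := by
  have hsplit : EE α = (∫ r in Ioc (0:ℝ) 1, r ^ (-α) / (r + 1))
      + ∫ r in Ioi (1:ℝ), r ^ (-α) / (r + 1) := by
    unfold EE
    rw [← Ioc_union_Ioi_eq_Ioi (zero_le_one : (0:ℝ) ≤ 1)]
    exact setIntegral_union (Set.Ioc_disjoint_Ioi le_rfl) measurableSet_Ioi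
      (intK_Ioc hα1 zero_lt_one) (intK_Ioi hα0 zero_lt_one)
  have hp1 : (1:ℝ)/2 ≤ ∫ r in Ioc (0:ℝ) 1, r ^ (-α) / (r + 1) := by
    have hconst : ∫ (_ : ℝ) in Ioc (0:ℝ) 1, (1:ℝ)/2 = 1/2 := by
      simp [Real.volume_Ioc]
    rw [← hconst]
    refine setIntegral_mono_on (integrableOn_const ?_) (intK_Ioc hα1 zero_lt_one)
      measurableSet_Ioc (fun r hr => ?_)
    · rw [Real.volume_Ioc]; norm_num
    · have hr0 : 0 < r := hr.1
      have h2 : r + 1 ≤ 2 := by linarith [hr.2]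
      have h3 : (1:ℝ) ≤ r ^ (-α) := by
        rw [show (1:ℝ) = r ^ (0:ℝ) by simp [Real.rpow_zero]]
        exact Real.rpow_le_rpow_of_exponent_ge hr0 hr.2 (by linarith)
      rw [div_le_div_iff₀ (by norm_num) (by linarith : (0:ℝ) < r + 1)]
      nlinarith
  have hp2 : 0 ≤ ∫ r in Ioi (1:ℝ), r ^ (-α) / (r + 1) := by
    refine setIntegral_nonneg measurableSet_Ioi (fun r hr => ?_)
    have hr0 : (0:ℝ) < r := lt_trans zero_lt_one hr
    positivity
  rw [hsplit]
  linarith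

/-- the fundamental representation of the derivative -/
lemma deriv_hh_eq (hα0 : 0 < α) (hα1 : α < 1) (hw : 2 < w) :
    deriv (hh α) w = (α / EE α) * TT α 0 w := by
  have hq0 := qq_pos hw
  have hq1 := qq_lt_one hw
  have hs := sqrt_pos' hw
  have hEE := EE_pos hα0 hα1
  have h1 : TT α 0 w = (qq w ^ (-α) - qq w ^ α) / Real.sqrt (w ^ 2 - 4) * EE α := by
    have h2 := key_integral hα0 hα1 hq0 hq1
    rw [qq_add_inv hw, inv_sub_qq hw] at h2
    unfold TT EE
    rw [← h2]
    refine setIntegral_congr_fun measurableSet_Ioc (fun r hr => ?_)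
    simp [pow_one]
  rw [(hasDerivAt_hh hw).deriv, h1]
  field_simp

/-! ### Elementary properties of `hh` -/

lemma hh_funct_eq (α : ℝ) {y : ℝ} (hy : 1 ≤ y) : hh α (y + y⁻¹) = y ^ α + y ^ (-α) := by
  have hy0 : (0:ℝ) < y := lt_of_lt_of_le zero_lt_one hy
  have hq : qq (y + y⁻¹) = y⁻¹ := by
    unfold qq
    have h1 : (y + y⁻¹) ^ 2 - 4 = (y - y⁻¹) ^ 2 := by field_simp; ring
    have h2 : (0:ℝ) ≤ y - y⁻¹ := by
      have := inv_le_one_of_one_le₀ hy; linarith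
    rw [h1, Real.sqrt_sq h2]
    ring
  unfold hh
  rw [hq]
  have e1 : (y⁻¹) ^ α = y ^ (-α) := by
    rw [Real.inv_rpow hy0.le, ← Real.rpow_neg hy0.le]
  have e2 : (y⁻¹) ^ (-α) = y ^ α := by
    rw [Real.inv_rpow hy0.le, Real.rpow_neg hy0.le, inv_inv]
  rw [e1, e2, add_comm]

lemma hh_nonneg (α : ℝ) {w : ℝ} (hw : 2 ≤ w) : 0 ≤ hh α w := by
  have h1 : Real.sqrt (w ^ 2 - 4) ≤ w := by
    have h := Real.sqrt_le_sqrt (by nlinarith : w ^ 2 - 4 ≤ w ^ 2)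
    rwa [Real.sqrt_sq (by linarith : (0:ℝ) ≤ w)] at h
  have hq : 0 ≤ qq w := by unfold qq; linarith
  exact add_nonneg (Real.rpow_nonneg hq _) (Real.rpow_nonneg hq _)

/-! ### Smoothness -/

lemma contDiffAt_D (hw : 2 < w) :
    ContDiffAt ℝ (⊤ : ℕ∞) (fun x => α * ((qq x) ^ (-α) - qq x ^ α) / Real.sqrt (x ^ 2 - 4)) w := by
  have c1 : ContDiffAt ℝ (⊤ : ℕ∞) (fun x : ℝ => x ^ 2 - 4) w :=
    ((contDiff_id.pow 2).sub contDiff_const).contDiffAt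
  have c2 : ContDiffAt ℝ (⊤ : ℕ∞) (fun x : ℝ => Real.sqrt (x ^ 2 - 4)) w :=
    c1.sqrt (sq4_pos hw).ne'
  have c3 : ContDiffAt ℝ (⊤ : ℕ∞) qq w := by
    have := (contDiffAt_id.sub c2).div_const (2:ℝ)
    exact this
  have hqne : qq w ≠ 0 := (qq_pos hw).ne'
  have c4 : ContDiffAt ℝ (⊤ : ℕ∞) (fun x => qq x ^ (-α)) w :=
    (contDiffAt_rpow_const_of_ne hqne).comp w c3
  have c5 : ContDiffAt ℝ (⊤ : ℕ∞) (fun x => qq x ^ α) w :=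
    (contDiffAt_rpow_const_of_ne hqne).comp w c3
  exact (contDiffAt_const.mul (c4.sub c5)).div c2 (sqrt_pos' hw).ne'

/-! ### Iterated derivatives -/

lemma fval (hα0 : 0 < α) (hα1 : α < 1) {x : ℝ} (hx : x ∈ Ioi (2:ℝ)) :
    derivWithin (hh α) (Ici 2) x = (α / EE α) * TT α 0 x := by
  rw [derivWithin_of_mem_nhds (Ici_mem_nhds hx)]
  exact deriv_hh_eq hα0 hα1 hx

lemma iter_eq (hα0 : 0 < α) (hα1 : α < 1) :
    ∀ m : ℕ, ∀ x ∈ Ioi (2:ℝ),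
      iteratedDerivWithin m (derivWithin (hh α) (Ici 2)) (Ioi 2) x
        = (-1:ℝ) ^ m * (m.factorial : ℝ) * (α / EE α) * TT α m x := by
  intro m
  induction m with
  | zero =>
      intro x hx
      rw [iteratedDerivWithin_zero]
      simpa using fval hα0 hα1 hx
  | succ m IH =>
      intro x hx
      have hx2 : (2:ℝ) < x := hx
      have hx0 : (0:ℝ) < x := by linarith
      rw [iteratedDerivWithin_succ,
        derivWithin_of_isOpen isOpen_Ioi hx]
      have heq : iteratedDerivWithin m (derivWithin (hh α) (Ici 2)) (Ioi 2)
          =ᶠ[nhds x] fun y => (-1:ℝ) ^ m * (m.factorial : ℝ) * (α / EE α) * TT α m y := by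
        filter_upwards [isOpen_Ioi.mem_nhds hx] with y hy using IH y hy
      rw [heq.deriv_eq]
      have hd := (hasDerivAt_TT hα0 hα1 m hx0).const_mul
        ((-1:ℝ) ^ m * (m.factorial : ℝ) * (α / EE α))
      rw [hd.deriv]
      rw [Nat.factorial_succ]
      push_cast
      ring

end Bern

open Bern in
/-- For `0 < α ≤ 1`, the function `y ↦ y^α + y^(-α)`, expressed in the variable
`w = y + y⁻¹`, is a Bernstein function of `w` on `[2,∞)`. -/
theorem pow_add_pow_neg_bernstein (α : ℝ) (h0 : 0 < α) (h1 : α ≤ 1) :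
    ∃ h : ℝ → ℝ,
      (∀ y : ℝ, 1 ≤ y → h (y + y⁻¹) = y ^ α + y ^ (-α)) ∧
      (∀ w ∈ Ici (2:ℝ), 0 ≤ h w) ∧
      CompMonoOn (derivWithin h (Ici 2)) (Ioi 2) := by
  refine ⟨hh α, fun y hy => hh_funct_eq α hy, fun w hw => hh_nonneg α hw, ?_⟩
  rcases eq_or_lt_of_le h1 with heq | hα1
  · -- the case α = 1 : the function is w itself
    subst heq
    have hval : ∀ x ∈ Ioi (2:ℝ), derivWithin (hh 1) (Ici 2) x = 1 := by
      intro x hx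
      have hx2 : (2:ℝ) < x := hx
      rw [derivWithin_of_mem_nhds (Ici_mem_nhds hx)]
      have heq : hh 1 =ᶠ[nhds x] id := by
        filter_upwards [isOpen_Ioi.mem_nhds hx] with y (hy : (2:ℝ) < y)
        have := qq_add_inv hy
        simp only [hh, Real.rpow_one, Real.rpow_neg_one, id]
        linarith
      rw [heq.deriv_eq, deriv_id]
    have hiter : ∀ m : ℕ, ∀ x ∈ Ioi (2:ℝ),
        iteratedDerivWithin m (derivWithin (hh 1) (Ici 2)) (Ioi 2) x
          = if m = 0 then 1 else 0 := by
      intro m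
      induction m with
      | zero => intro x hx; rw [iteratedDerivWithin_zero]; simpa using hval x hx
      | succ m IH =>
          intro x hx
          rw [iteratedDerivWithin_succ,
            derivWithin_of_isOpen isOpen_Ioi hx]
          have heq : iteratedDerivWithin m (derivWithin (hh 1) (Ici 2)) (Ioi 2)
              =ᶠ[nhds x] fun _ => if m = 0 then (1:ℝ) else 0 := by
            filter_upwards [isOpen_Ioi.mem_nhds hx] with y hy using IH y hy
          rw [heq.deriv_eq, deriv_const]
          simp
    constructor
    · exact contDiffOn_const.congr hval
    · intro m x hx
      rw [hiter m x hx]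
      by_cases hm : m = 0 <;> simp [hm]
  · -- the case α < 1
    constructor
    · have hD : ContDiffOn ℝ (⊤ : ℕ∞)
          (fun x => α * ((qq x) ^ (-α) - qq x ^ α) / Real.sqrt (x ^ 2 - 4)) (Ioi 2) :=
        fun x hx => (contDiffAt_D hx).contDiffWithinAt
      refine hD.congr (fun x hx => ?_)
      rw [derivWithin_of_mem_nhds (Ici_mem_nhds hx)]
      exact (hasDerivAt_hh hx).deriv
    · intro m x hx
      have hx2 : (2:ℝ) < x := hx
      rw [iter_eq h0 hα1 m x hx]
      have hsq : (-1:ℝ) ^ m * (-1:ℝ) ^ m = 1 := by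
        rw [← pow_add, ← two_mul, pow_mul]
        norm_num
      have hT := TT_nonneg (α := α) m (by linarith : (0:ℝ) < x)
      have hE := EE_pos h0 hα1
      calc (0:ℝ) ≤ ((-1:ℝ) ^ m * (-1:ℝ) ^ m) * ((m.factorial : ℝ) * (α / EE α) * TT α m x) := by
            rw [hsq, one_mul]
            positivity
        _ = (-1:ℝ) ^ m * ((-1:ℝ) ^ m * (m.factorial : ℝ) * (α / EE α) * TT α m x) := by ring
end
end

section
/- Fix A, B > 0. The function s ↦ s + √(s² − AB), defined for s ≥ √(AB), is a Bernstein function: it is nonnegative and its derivative 1 + s/√(s² − AB) is completely monotone on (√(AB), ∞). -/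
open MeasureTheory Real Set Filter

noncomputable section

open Polynomial in
/-- The recursion producing the polynomial numerators. -/
noncomputable def bQ (c : ℝ) (m : ℕ) (P : Polynomial ℝ) : Polynomial ℝ :=
  C ((2*m+3 : ℕ) : ℝ) * (X * P) + C c * derivative P - X * (X * derivative P)

noncomputable def bP (c : ℝ) : ℕ → Polynomial ℝ
  | 0 => 1
  | m+1 => bQ c m (bP c m)

open Polynomial in
lemma bP_good (c : ℝ) (hc : 0 ≤ c) (m : ℕ) :
    (∀ k, 0 ≤ (bP c m).coeff k) ∧ (∀ k, m < k → (bP c m).coeff k = 0) := by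
  induction m with
  | zero =>
    refine ⟨fun k => ?_, fun k hk => ?_⟩
    · rcases k with _ | k <;> simp [bP, coeff_one]
    · rcases k with _ | k
      · omega
      · simp [bP, coeff_one]
  | succ m ih =>
    obtain ⟨ih1, ih2⟩ := ih
    set P := bP c m with hP
    have hcoeff : ∀ k, (bP c (m+1)).coeff k =
        ((2*m+3 : ℕ) : ℝ) * (X * P).coeff k + c * (derivative P).coeff k
          - (X * (X * derivative P)).coeff k := by
      intro k
      show (bQ c m P).coeff k = _
      rw [bQ, coeff_sub, coeff_add, coeff_C_mul, coeff_C_mul]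
    have e0 : ∀ Q : Polynomial ℝ, (X * Q).coeff 0 = 0 := by
      intro Q; rw [mul_coeff_zero, coeff_X_zero, zero_mul]
    constructor
    · intro k
      rw [hcoeff]
      match k with
      | 0 =>
        rw [e0, e0, coeff_derivative]
        have := mul_nonneg hc (mul_nonneg (ih1 1) (by norm_num : (0:ℝ) ≤ (0:ℕ)+1))
        linarith
      | 1 =>
        have e1 : (X * P).coeff 1 = P.coeff 0 := coeff_X_mul P 0
        have e2 : (X * (X * derivative P)).coeff 1 = (X * derivative P).coeff 0 :=
          coeff_X_mul _ 0
        rw [e1, e2, e0, coeff_derivative]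
        have h1 := mul_nonneg (by positivity : (0:ℝ) ≤ ((2*m+3:ℕ):ℝ)) (ih1 0)
        have h2 := mul_nonneg hc (mul_nonneg (ih1 2) (by norm_num : (0:ℝ) ≤ (1:ℕ)+1))
        linarith
      | (k+2) =>
        have e1 : (X * P).coeff (k+2) = P.coeff (k+1) := coeff_X_mul P (k+1)
        have e2 : (X * (X * derivative P)).coeff (k+2) = (X * derivative P).coeff (k+1) :=
          coeff_X_mul _ (k+1)
        have e3 : (X * derivative P).coeff (k+1) = (derivative P).coeff k :=
          coeff_X_mul _ k
        rw [e1, e2, e3, coeff_derivative, coeff_derivative]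
        have h2 := mul_nonneg hc (mul_nonneg (ih1 (k+3))
          (by positivity : (0:ℝ) ≤ ((k+2:ℕ):ℝ)+1))
        rcases le_or_gt (k+1) m with h | h
        · have h1 := ih1 (k+1)
          have hfac : ((k:ℝ)+1) ≤ ((2*m+3:ℕ):ℝ) := by
            push_cast
            have : (k:ℝ) + 1 ≤ (m:ℝ) := by exact_mod_cast h
            linarith
          nlinarith [mul_nonneg (sub_nonneg.mpr hfac) h1]
        · rw [ih2 (k+1) h]
          simpa using h2
    · intro k hk
      rw [hcoeff]
      match k, hk with
      | (k+2), hk =>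
        have e1 : (X * P).coeff (k+2) = P.coeff (k+1) := coeff_X_mul P (k+1)
        have e2 : (X * (X * derivative P)).coeff (k+2) = (X * derivative P).coeff (k+1) :=
          coeff_X_mul _ (k+1)
        have e3 : (X * derivative P).coeff (k+1) = (derivative P).coeff k := coeff_X_mul _ k
        rw [e1, e2, e3, coeff_derivative, coeff_derivative]
        rw [ih2 (k+1) (by omega), ih2 (k+3) (by omega)]
        ring

open Polynomial in
lemma bP_eval_nonneg (c : ℝ) (hc : 0 ≤ c) (m : ℕ) {x : ℝ} (hx : 0 ≤ x) :
    0 ≤ (bP c m).eval x := by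
  rw [Polynomial.eval_eq_sum_range]
  exact Finset.sum_nonneg fun i _ => mul_nonneg ((bP_good c hc m).1 i) (pow_nonneg hx i)

lemma hasDerivAt_f (c x : ℝ) (hu : 0 < x^2 - c) :
    HasDerivAt (fun s : ℝ => s + Real.sqrt (s ^ 2 - c)) (1 + x / Real.sqrt (x^2 - c)) x := by
  have h1 : HasDerivAt (fun s : ℝ => s ^ 2 - c) (2 * x) x := by
    simpa using ((hasDerivAt_pow 2 x).sub_const c)
  have h2 : HasDerivAt (fun s : ℝ => Real.sqrt (s ^ 2 - c))
      (1 / (2 * Real.sqrt (x ^ 2 - c)) * (2 * x)) x :=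
    (Real.hasDerivAt_sqrt (ne_of_gt hu)).comp x h1
  have hs : Real.sqrt (x^2 - c) ≠ 0 := by positivity
  have := (hasDerivAt_id x).add h2
  refine this.congr_deriv ?_
  field_simp

lemma hasDerivAt_G (c x : ℝ) (hu : 0 < x^2 - c) :
    HasDerivAt (fun y : ℝ => 1 + y / Real.sqrt (y ^ 2 - c))
      (-(c * ((1:ℝ) / ((x^2 - c)^(0+1) * Real.sqrt (x^2 - c))))) x := by
  have h1 : HasDerivAt (fun s : ℝ => s ^ 2 - c) (2 * x) x := by
    simpa using ((hasDerivAt_pow 2 x).sub_const c)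
  have h2 : HasDerivAt (fun s : ℝ => Real.sqrt (s ^ 2 - c))
      (1 / (2 * Real.sqrt (x ^ 2 - c)) * (2 * x)) x :=
    (Real.hasDerivAt_sqrt (ne_of_gt hu)).comp x h1
  have hs : Real.sqrt (x^2 - c) ≠ 0 := by positivity
  have := ((hasDerivAt_id x).div h2 hs).const_add 1
  refine this.congr_deriv ?_
  set q := Real.sqrt (x^2 - c) with hq
  have hq2 : q^2 = x^2 - c := Real.sq_sqrt hu.le
  have hc' : c = x^2 - q^2 := by linarith
  rw [← hq2, hc']
  field_simp
  simp only [id]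
  ring

open Polynomial in
lemma hasDerivAt_key (c : ℝ) (m : ℕ) (P : Polynomial ℝ) {x : ℝ} (hu : 0 < x^2 - c) :
    HasDerivAt (fun y : ℝ => P.eval y / ((y ^ 2 - c)^(m+1) * Real.sqrt (y ^ 2 - c)))
      (-((bQ c m P).eval x / ((x^2 - c)^(m+2) * Real.sqrt (x^2 - c)))) x := by
  have h1 : HasDerivAt (fun s : ℝ => s ^ 2 - c) (2 * x) x := by
    simpa using ((hasDerivAt_pow 2 x).sub_const c)
  have h2 : HasDerivAt (fun s : ℝ => Real.sqrt (s ^ 2 - c))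
      (1 / (2 * Real.sqrt (x ^ 2 - c)) * (2 * x)) x :=
    (Real.hasDerivAt_sqrt (ne_of_gt hu)).comp x h1
  have h3 : HasDerivAt (fun s : ℝ => (s ^ 2 - c)^(m+1)) ((m+1 : ℕ) * (x^2-c)^m * (2*x)) x := by
    exact (h1.pow (m+1)).congr_deriv (by simp)
  have hs : Real.sqrt (x^2 - c) ≠ 0 := by positivity
  have hD : HasDerivAt (fun y : ℝ => (y ^ 2 - c)^(m+1) * Real.sqrt (y ^ 2 - c))
      (((m+1 : ℕ) * (x^2-c)^m * (2*x)) * Real.sqrt (x^2-c)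
        + (x^2-c)^(m+1) * (1 / (2 * Real.sqrt (x ^ 2 - c)) * (2 * x))) x := h3.mul h2
  have hDne : (x^2 - c)^(m+1) * Real.sqrt (x^2 - c) ≠ 0 := by positivity
  have hd := (P.hasDerivAt x).div hD hDne
  refine hd.congr_deriv ?_
  unfold bQ
  simp only [eval_sub, eval_add, eval_mul, eval_C, eval_X]
  set q := Real.sqrt (x^2 - c) with hq
  have hq2 : q^2 = x^2 - c := Real.sq_sqrt hu.le
  have hc' : c = x^2 - q^2 := by linarith
  rw [← hq2, hc']
  have hq0 : q ≠ 0 := hs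
  field_simp
  push_cast
  ring

/-- `s ↦ s + √(s² − AB)` is a Bernstein function on `[√(AB), ∞)`: it is nonnegative and
its derivative `1 + s/√(s² − AB)` is completely monotone on `(√(AB), ∞)`. -/
theorem bernstein_s_add_sqrt (A B : ℝ) (hA : 0 < A) (hB : 0 < B) :
    (∀ s : ℝ, Real.sqrt (A * B) ≤ s → 0 ≤ s + Real.sqrt (s ^ 2 - A * B)) ∧
    (∀ s : ℝ, Real.sqrt (A * B) < s →
      deriv (fun s : ℝ => s + Real.sqrt (s ^ 2 - A * B)) s
        = 1 + s / Real.sqrt (s ^ 2 - A * B)) ∧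
    CompMonoOn (deriv (fun s : ℝ => s + Real.sqrt (s ^ 2 - A * B)))
      (Ioi (Real.sqrt (A * B))) := by
  set c := A * B with hcdef
  have hc : 0 < c := mul_pos hA hB
  have hr : 0 < Real.sqrt c := Real.sqrt_pos.mpr hc
  have hu : ∀ x : ℝ, Real.sqrt c < x → 0 < x^2 - c := by
    intro x hx
    have hx0 : 0 < x := lt_trans hr hx
    nlinarith [Real.sq_sqrt hc.le, Real.sqrt_nonneg c]
  set S := Ioi (Real.sqrt c) with hSdef
  have hud : UniqueDiffOn ℝ S := uniqueDiffOn_Ioi _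
  set G : ℝ → ℝ := fun y => 1 + y / Real.sqrt (y^2 - c) with hGdef
  have hEq : EqOn (deriv (fun s : ℝ => s + Real.sqrt (s ^ 2 - c))) G S := by
    intro x hx
    exact (hasDerivAt_f c x (hu x hx)).deriv
  have hGnonneg : ∀ x ∈ S, 0 ≤ G x := by
    intro x hx
    have hx0 : 0 < x := lt_trans hr hx
    have := hu x hx
    have : 0 ≤ x / Real.sqrt (x^2 - c) := by positivity
    simp only [hGdef]
    linarith
  have main : ∀ m : ℕ, ∀ x ∈ S, iteratedDerivWithin (m+1) G S x
      = (-1:ℝ)^(m+1) * (c * ((bP c m).eval x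
          / ((x^2 - c)^(m+1) * Real.sqrt (x^2 - c)))) := by
    intro m
    induction m with
    | zero =>
      intro x hx
      rw [iteratedDerivWithin_one, derivWithin_of_isOpen isOpen_Ioi hx,
        (hasDerivAt_G c x (hu x hx)).deriv]
      simp [bP]
    | succ m ih =>
      intro x hx
      rw [iteratedDerivWithin_succ]
      have hEq2 : EqOn (iteratedDerivWithin (m+1) G S)
          (fun y => (-1:ℝ)^(m+1) * (c * ((bP c m).eval y
            / ((y^2 - c)^(m+1) * Real.sqrt (y^2 - c))))) S := fun y hy => ih y hy
      rw [derivWithin_congr hEq2 (hEq2 hx), derivWithin_of_isOpen isOpen_Ioi hx]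
      have hkey := ((hasDerivAt_key c m (bP c m) (hu x hx)).const_mul c).const_mul
        ((-1:ℝ)^(m+1))
      rw [hkey.deriv]
      have hbp : bP c (m+1) = bQ c m (bP c m) := rfl
      rw [hbp]
      ring
  refine ⟨?_, ?_, ?_, ?_⟩
  · intro s hs
    exact add_nonneg (le_trans (Real.sqrt_nonneg _) hs) (Real.sqrt_nonneg _)
  · intro s hs
    exact (hasDerivAt_f c s (hu s hs)).deriv
  · -- smoothness
    refine ContDiffOn.congr ?_ hEq
    intro x hx
    have hux := hu x hx
    have hsx : Real.sqrt (x^2 - c) ≠ 0 := by positivity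
    refine ContDiffAt.contDiffWithinAt ?_
    refine ContDiffAt.add contDiffAt_const ?_
    refine ContDiffAt.div contDiffAt_id ?_ hsx
    exact ContDiffAt.sqrt ((contDiffAt_id.pow 2).sub contDiffAt_const) (ne_of_gt hux)
  · intro m x hx
    rw [iteratedDerivWithin_congr hEq hx]
    rcases m with _ | m
    · simpa [iteratedDerivWithin_zero] using hGnonneg x hx
    · rw [main m x hx]
      have hx0 : 0 < x := lt_trans hr hx
      have hux := hu x hx
      have heval := bP_eval_nonneg c hc.le m hx0.le
      rw [← mul_assoc, ← mul_pow]
      norm_num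
      positivity
end
end
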